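/- For a bounded subset M of a Banach algebra A, ρ(L_M R_M) = ρ(M)^2, i.e., the joint spectral radius of the family of two-sided multiplication operators {L_a R_b : a, b ∈ M} equals the square of the joint spectral radius of M. -/

import Mathlib

open scoped Pointwise

/-- The norm of a bounded set: supremum of the norms of its elements. -/
noncomputable def setNorm {A : Type*} [NormedRing A] (M : Set A) : ℝ :=
  sSup ((fun a => ‖a‖) '' M)

/-- The joint spectral radius of a bounded subset of a normed algebra:
`ρ(M) = inf_n ‖M^n‖^{1/n}`. -/
noncomputable def jsr {A : Type*} [NormedRing A] (M : Set A) : ℝ :=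
  ⨅ n : ℕ+, (setNorm (M ^ (n : ℕ))) ^ ((n : ℝ)⁻¹)

/-- Left multiplication operator `L_a : x ↦ a x`. -/
noncomputable def Lmul {A : Type*} [NormedRing A] [NormedAlgebra ℂ A] (a : A) : A →L[ℂ] A :=
  ContinuousLinearMap.mul ℂ A a

/-- Right multiplication operator `R_b : x ↦ x b`. -/
noncomputable def Rmul {A : Type*} [NormedRing A] [NormedAlgebra ℂ A] (b : A) : A →L[ℂ] A :=
  (ContinuousLinearMap.mul ℂ A).flip b

/-- The family `L_M R_N = {L_a R_b : a ∈ M, b ∈ N}`. -/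
noncomputable def LR {A : Type*} [NormedRing A] [NormedAlgebra ℂ A] (M N : Set A) :
    Set (A →L[ℂ] A) :=
  {T | ∃ a ∈ M, ∃ b ∈ N, T = (Lmul a).comp (Rmul b)}

/-!
Since `L_a R_b ∘ L_c R_d = L_{ac} R_{db}`, the `n`-th power of `L_M R_M` is `L_{M^n} R_{M^n}`.
Hence `‖(L_M R_M)^n‖ ≤ ‖M^n‖²`, which gives `ρ(L_M R_M) ≤ ρ(M)²`, while evaluating at `1` gives
`‖M^{2n}‖ ≤ ‖1‖ ‖(L_M R_M)^n‖`. The constant `‖1‖` disappears in the limit: by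
submultiplicativity `‖S^{nk}‖ ≤ ‖S^n‖^k`, so `x^{nk} ≤ C ‖S^{nk}‖` for all `k` forces
`x^n ≤ ‖S^n‖`.
-/

open Bornology Filter Topology

lemma le_of_eventually_pow_le_mul_pow {a b C : ℝ} (hb : 0 ≤ b)
    (h : ∀ᶠ k in atTop, a ^ k ≤ C * b ^ k) : a ≤ b := by
  by_contra! hba
  have ha : 0 < a := hb.trans_lt hba
  have hlim : Tendsto (fun k : ℕ => C * (b / a) ^ k) atTop (𝓝 0) := by
    simpa using (tendsto_pow_atTop_nhds_zero_of_lt_one (div_nonneg hb ha.le)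
      ((div_lt_one ha).2 hba)).const_mul C
  obtain ⟨k, hk, hsmall⟩ := (h.and (hlim.eventually (gt_mem_nhds one_pos))).exists
  have hk' : a ^ k ≤ C * (b / a) ^ k * a ^ k := by
    rwa [div_pow, mul_assoc, div_mul_cancel₀ _ (pow_ne_zero k ha.ne')]
  exact hk'.not_gt ((mul_lt_iff_lt_one_left (pow_pos ha k)).2 hsmall)

section SetNorm

variable {B : Type*} [NormedRing B]

lemma setNorm_nonneg (M : Set B) : 0 ≤ setNorm M :=
  Real.sSup_nonneg <| by rintro _ ⟨a, -, rfl⟩; exact norm_nonneg a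

lemma norm_le_setNorm {M : Set B} (hM : IsBounded M) {x : B} (hx : x ∈ M) :
    ‖x‖ ≤ setNorm M := by
  obtain ⟨C, hC⟩ := isBounded_iff_forall_norm_le.1 hM
  exact le_csSup ⟨C, by rintro _ ⟨a, ha, rfl⟩; exact hC a ha⟩ ⟨x, hx, rfl⟩

lemma setNorm_le {M : Set B} {C : ℝ} (hC : 0 ≤ C) (h : ∀ x ∈ M, ‖x‖ ≤ C) : setNorm M ≤ C :=
  Real.sSup_le (by rintro _ ⟨a, ha, rfl⟩; exact h a ha) hC

lemma setNorm_mul_le {M N : Set B} (hM : IsBounded M) (hN : IsBounded N) :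
    setNorm (M * N) ≤ setNorm M * setNorm N :=
  setNorm_le (mul_nonneg (setNorm_nonneg M) (setNorm_nonneg N)) <| by
    rintro _ ⟨a, ha, b, hb, rfl⟩
    exact norm_mul_le_of_le (norm_le_setNorm hM ha) (norm_le_setNorm hN hb)

lemma Bornology.IsBounded.pow {M : Set B} (hM : IsBounded M) : ∀ n : ℕ, IsBounded (M ^ n)
  | 0 => by rw [pow_zero, ← Set.singleton_one]; exact isBounded_singleton
  | n + 1 => by rw [pow_succ]; exact isBounded_mul (hM.pow n) hM

lemma setNorm_pow_mul_le {M : Set B} (hM : IsBounded M) (n : ℕ) {k : ℕ} (hk : 0 < k) :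
    setNorm (M ^ (n * k)) ≤ setNorm (M ^ n) ^ k := by
  induction k, hk using Nat.le_induction with
  | base => simp
  | succ k _ ih =>
    calc setNorm (M ^ (n * (k + 1))) ≤ setNorm (M ^ (n * k)) * setNorm (M ^ n) := by
          rw [mul_add_one, pow_add]; exact setNorm_mul_le (hM.pow _) (hM.pow _)
      _ ≤ setNorm (M ^ n) ^ k * setNorm (M ^ n) := by gcongr; exact setNorm_nonneg _
      _ = setNorm (M ^ n) ^ (k + 1) := (pow_succ _ _).symm

lemma jsr_nonneg (M : Set B) : 0 ≤ jsr M :=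
  Real.iInf_nonneg fun _ => Real.rpow_nonneg (setNorm_nonneg _) _

lemma jsr_le_setNorm_pow_rpow (M : Set B) {n : ℕ} (hn : 0 < n) :
    jsr M ≤ setNorm (M ^ n) ^ (n : ℝ)⁻¹ :=
  ciInf_le ⟨0, by rintro _ ⟨m, rfl⟩; exact Real.rpow_nonneg (setNorm_nonneg _) _⟩ (⟨n, hn⟩ : ℕ+)

lemma jsr_pow_le_setNorm_pow (M : Set B) {n : ℕ} (hn : 0 < n) : jsr M ^ n ≤ setNorm (M ^ n) := by
  have := (Real.le_rpow_inv_iff_of_pos (jsr_nonneg M) (setNorm_nonneg _)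
    (Nat.cast_pos.2 hn)).1 (jsr_le_setNorm_pow_rpow M hn)
  rwa [Real.rpow_natCast] at this

lemma jsr_le_of_setNorm_pow_le (M : Set B) {n : ℕ} (hn : 0 < n) {z : ℝ} (hz : 0 ≤ z)
    (h : setNorm (M ^ n) ≤ z ^ n) : jsr M ≤ z := by
  refine (jsr_le_setNorm_pow_rpow M hn).trans ?_
  rwa [Real.rpow_inv_le_iff_of_pos (setNorm_nonneg _) hz (Nat.cast_pos.2 hn), Real.rpow_natCast]

lemma exists_setNorm_pow_lt_of_jsr_lt {M : Set B} {z : ℝ} (h : jsr M < z) :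
    ∃ n, 0 < n ∧ setNorm (M ^ n) < z ^ n := by
  obtain ⟨n, hn⟩ := exists_lt_of_ciInf_lt h
  refine ⟨n, n.pos, ?_⟩
  rwa [Real.rpow_inv_lt_iff_of_pos (setNorm_nonneg _) ((jsr_nonneg M).trans h.le)
    (Nat.cast_pos.2 n.pos), Real.rpow_natCast] at hn

lemma le_jsr_of_pow_le_mul_setNorm_pow {M : Set B} (hM : IsBounded M) {x C : ℝ} (hx : 0 ≤ x)
    (hC : 0 ≤ C) (h : ∀ n, 0 < n → x ^ n ≤ C * setNorm (M ^ n)) : x ≤ jsr M := by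
  refine le_ciInf fun n => (Real.le_rpow_inv_iff_of_pos hx (setNorm_nonneg _)
    (Nat.cast_pos.2 n.pos)).2 ?_
  rw [Real.rpow_natCast]
  refine le_of_eventually_pow_le_mul_pow (C := C) (setNorm_nonneg _) (eventually_atTop.2 ⟨1, fun k hk => ?_⟩)
  calc (x ^ (n : ℕ)) ^ k = x ^ ((n : ℕ) * k) := (pow_mul _ _ _).symm
    _ ≤ C * setNorm (M ^ ((n : ℕ) * k)) := h _ (Nat.mul_pos n.pos hk)
    _ ≤ C * setNorm (M ^ (n : ℕ)) ^ k := by gcongr; exact setNorm_pow_mul_le hM _ hk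

end SetNorm

section JsrComparison

variable {B E : Type*} [NormedRing B] [NormedRing E]

lemma jsr_le_jsr_pow_of_setNorm_pow_le {S : Set B} {T : Set E} (k : ℕ)
    (h : ∀ n, 0 < n → setNorm (T ^ n) ≤ setNorm (S ^ n) ^ k) : jsr T ≤ jsr S ^ k := by
  have hlim : Tendsto (fun z : ℝ => z ^ k) (𝓝[>] (jsr S)) (𝓝 (jsr S ^ k)) :=
    ((continuous_pow k).tendsto _).mono_left nhdsWithin_le_nhds
  refine ge_of_tendsto hlim (eventually_nhdsWithin_of_forall fun z hz => ?_)
  obtain ⟨n, hn, hlt⟩ := exists_setNorm_pow_lt_of_jsr_lt hz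
  have hz0 : 0 ≤ z := (jsr_nonneg S).trans (le_of_lt hz)
  refine jsr_le_of_setNorm_pow_le T hn (pow_nonneg hz0 k) ?_
  calc setNorm (T ^ n) ≤ setNorm (S ^ n) ^ k := h n hn
    _ ≤ (z ^ n) ^ k := by gcongr; exact setNorm_nonneg _
    _ = (z ^ k) ^ n := by rw [← pow_mul, ← pow_mul, mul_comm]

lemma jsr_pow_le_jsr_of_setNorm_pow_le_mul {S : Set B} {T : Set E} (hT : IsBounded T) {k : ℕ}
    (hk : 0 < k) {C : ℝ} (hC : 0 ≤ C) (h : ∀ n, 0 < n → setNorm (S ^ (k * n)) ≤ C * setNorm (T ^ n)) :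
    jsr S ^ k ≤ jsr T :=
  le_jsr_of_pow_le_mul_setNorm_pow hT (pow_nonneg (jsr_nonneg S) k) hC fun n hn => by
    rw [← pow_mul]; exact (jsr_pow_le_setNorm_pow S (Nat.mul_pos hk hn)).trans (h n hn)

end JsrComparison

section MulOperators

variable {A : Type*} [NormedRing A] [NormedAlgebra ℂ A]

@[simp]
lemma Lmul_apply (a x : A) : Lmul a x = a * x := rfl

@[simp]
lemma Rmul_apply (b x : A) : Rmul b x = x * b := rfl

lemma Lmul_comp_Rmul_mul (a b c d : A) :
    (Lmul a).comp (Rmul b) * (Lmul c).comp (Rmul d) = (Lmul (a * c)).comp (Rmul (d * b)) := by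
  ext x
  simp only [ContinuousLinearMap.mul_def, ContinuousLinearMap.comp_apply, Lmul_apply, Rmul_apply,
    mul_assoc]

lemma LR_mul_LR (M N M' N' : Set A) : LR M N * LR M' N' = LR (M * M') (N' * N) := by
  ext T; constructor
  · rintro ⟨_, ⟨a, ha, b, hb, rfl⟩, _, ⟨c, hc, d, hd, rfl⟩, rfl⟩
    exact ⟨a * c, Set.mul_mem_mul ha hc, d * b, Set.mul_mem_mul hd hb, Lmul_comp_Rmul_mul a b c d⟩
  · rintro ⟨_, ⟨a, ha, c, hc, rfl⟩, _, ⟨d, hd, b, hb, rfl⟩, rfl⟩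
    exact ⟨_, ⟨a, ha, b, hb, rfl⟩, _, ⟨c, hc, d, hd, rfl⟩, Lmul_comp_Rmul_mul a b c d⟩

lemma LR_one : LR (1 : Set A) 1 = 1 := by
  ext T
  have : (Lmul (1 : A)).comp (Rmul 1) = 1 := by ext x; simp
  simp [LR, this]

lemma LR_pow (M N : Set A) : ∀ n : ℕ, LR M N ^ n = LR (M ^ n) (N ^ n)
  | 0 => by rw [pow_zero, pow_zero, pow_zero, LR_one]
  | n + 1 => by rw [pow_succ, LR_pow M N n, LR_mul_LR, ← pow_succ, ← pow_succ']

lemma norm_Lmul_comp_Rmul_le (a b : A) : ‖(Lmul a).comp (Rmul b)‖ ≤ ‖a‖ * ‖b‖ :=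
  ContinuousLinearMap.opNorm_le_bound _ (by positivity) fun x => by
    rw [ContinuousLinearMap.comp_apply, Lmul_apply, Rmul_apply, ← mul_assoc]
    exact norm_mul₃_le.trans_eq (by ring)

lemma norm_mul_le_norm_one_mul_norm_Lmul_comp_Rmul (a b : A) :
    ‖a * b‖ ≤ ‖(1 : A)‖ * ‖(Lmul a).comp (Rmul b)‖ := by
  simpa [mul_comm] using ((Lmul a).comp (Rmul b)).le_opNorm 1

variable {M N : Set A}

lemma norm_le_of_mem_LR (hM : IsBounded M) (hN : IsBounded N) {T : A →L[ℂ] A} (hT : T ∈ LR M N) :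
    ‖T‖ ≤ setNorm M * setNorm N := by
  obtain ⟨a, ha, b, hb, rfl⟩ := hT
  exact (norm_Lmul_comp_Rmul_le a b).trans
    (mul_le_mul (norm_le_setNorm hM ha) (norm_le_setNorm hN hb) (norm_nonneg b) (setNorm_nonneg M))

lemma isBounded_LR (hM : IsBounded M) (hN : IsBounded N) : IsBounded (LR M N) :=
  isBounded_iff_forall_norm_le.2 ⟨_, fun _ => norm_le_of_mem_LR hM hN⟩

lemma setNorm_LR_le (hM : IsBounded M) (hN : IsBounded N) :
    setNorm (LR M N) ≤ setNorm M * setNorm N :=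
  setNorm_le (mul_nonneg (setNorm_nonneg M) (setNorm_nonneg N)) fun _ => norm_le_of_mem_LR hM hN

lemma setNorm_mul_le_norm_one_mul_setNorm_LR (hM : IsBounded M) (hN : IsBounded N) :
    setNorm (M * N) ≤ ‖(1 : A)‖ * setNorm (LR M N) :=
  setNorm_le (mul_nonneg (norm_nonneg _) (setNorm_nonneg _)) <| by
    rintro _ ⟨a, ha, b, hb, rfl⟩
    exact (norm_mul_le_norm_one_mul_norm_Lmul_comp_Rmul a b).trans <| mul_le_mul_of_nonneg_left
      (norm_le_setNorm (isBounded_LR hM hN) ⟨a, ha, b, hb, rfl⟩) (norm_nonneg _)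

end MulOperators

theorem jsr_LR_eq_sq_general {A : Type*} [NormedRing A] [NormedAlgebra ℂ A]
    (M : Set A) (hM : Bornology.IsBounded M) :
    jsr (LR M M) = (jsr M) ^ 2 := by
  refine le_antisymm (jsr_le_jsr_pow_of_setNorm_pow_le 2 fun n _ => ?_)
    (jsr_pow_le_jsr_of_setNorm_pow_le_mul (isBounded_LR hM hM) two_pos (norm_nonneg (1 : A))
      fun n _ => ?_)
  · rw [LR_pow, sq]
    exact setNorm_LR_le (hM.pow n) (hM.pow n)
  · rw [LR_pow, two_mul, pow_add]
    exact setNorm_mul_le_norm_one_mul_setNorm_LR (hM.pow n) (hM.pow n)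

/-- for a bounded subset `M` of a complex Banach algebra,
`ρ(L_M R_M) = ρ(M)^2`. -/
theorem jsr_LR_eq_sq {A : Type*} [NormedRing A] [NormedAlgebra ℂ A] [CompleteSpace A]
    (M : Set A) (hM : Bornology.IsBounded M) :
    jsr (LR M M) = (jsr M) ^ 2 :=
  jsr_LR_eq_sq_general M hM
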